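/- arXiv:2105.03306 — 2 statements merged into one kernel-verified Lean document; each statement's English description precedes it below -/
import Mathlib

section
/- Let B ≥ 0, δ ≥ 0, P ≥ 0 be real numbers and let H, H̃ be nonzero K×N complex matrices with ‖H‖_F ≤ B and ‖H̃‖_F ≤ δ·‖H‖_F. Set Ĥ = H − H̃ and assume Ĥ ≠ 0. Then ‖ √P·(H Hᴴ)/‖H‖_F − √P·(Ĥ Ĥᴴ)/‖Ĥ‖_F ‖_F ≤ √P · B · δ · (1 + (2+δ)·B/‖Ĥ‖_F). -/
open Matrix

/-- Frobenius norm of a complex matrix. -/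
noncomputable def frobNorm {m n : Type*} [Fintype m] [Fintype n]
    (A : Matrix m n ℂ) : ℝ :=
  Real.sqrt (∑ i, ∑ j, ‖A i j‖ ^ 2)

/-!
Write `a = ‖H‖`, `b = ‖Ĥ‖`, `t = ‖H̃‖`. Then
`a⁻¹ H Hᴴ - b⁻¹ Ĥ Ĥᴴ = (a⁻¹ - b⁻¹) H Hᴴ + b⁻¹ (H H̃ᴴ + H̃ Ĥᴴ)`, and submultiplicativity of the
Frobenius norm together with `|a - b| ≤ t` bounds this by `t a / b + (a t + t b) / b`,
i.e. by `t (1 + 2a/b)`. With `t ≤ δ a ≤ δ B` this is within the claimed bound.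
-/

attribute [local instance] Matrix.frobeniusNormedAddCommGroup Matrix.frobeniusNormedSpace

lemma mul_conjTranspose_sub_mul_conjTranspose {α m n : Type*} [NonUnitalRing α] [StarRing α]
    [Fintype n] (H G : Matrix m n α) :
    H * Hᴴ - G * Gᴴ = H * (H - G)ᴴ + (H - G) * Gᴴ := by
  simp only [conjTranspose_sub, Matrix.mul_sub, Matrix.sub_mul]
  abel

section Frobenius

variable {𝕜 : Type*} [RCLike 𝕜] {l m n : Type*} [Fintype l] [Fintype m] [Fintype n]

lemma frobNorm_eq_norm (A : Matrix m n ℂ) : frobNorm A = ‖A‖ := by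
  rw [frobenius_norm_def, frobNorm, Real.sqrt_eq_rpow]
  norm_num

lemma frobenius_norm_mul_conjTranspose_le (A : Matrix l n 𝕜) (B : Matrix m n 𝕜) :
    ‖A * Bᴴ‖ ≤ ‖A‖ * ‖B‖ :=
  (frobenius_norm_mul A Bᴴ).trans_eq (by rw [frobenius_norm_conjTranspose])

lemma frobenius_norm_inv_smul_mul_conjTranspose_sub_le {H G : Matrix m n 𝕜}
    (hH : H ≠ 0) (hG : G ≠ 0) :
    ‖‖H‖⁻¹ • (H * Hᴴ) - ‖G‖⁻¹ • (G * Gᴴ)‖ ≤ ‖H - G‖ * (1 + 2 * ‖H‖ / ‖G‖) := by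
  have ha : 0 < ‖H‖ := norm_pos_iff.mpr hH
  have hb : 0 < ‖G‖ := norm_pos_iff.mpr hG
  have hinv : |‖H‖⁻¹ - ‖G‖⁻¹| ≤ ‖H - G‖ / (‖H‖ * ‖G‖) := by
    rw [inv_sub_inv ha.ne' hb.ne', abs_div, abs_of_pos (mul_pos ha hb), abs_sub_comm]
    gcongr
    exact abs_norm_sub_norm_le H G
  have hsplit : ‖H‖⁻¹ • (H * Hᴴ) - ‖G‖⁻¹ • (G * Gᴴ) =
      (‖H‖⁻¹ - ‖G‖⁻¹) • (H * Hᴴ) + ‖G‖⁻¹ • (H * (H - G)ᴴ + (H - G) * Gᴴ) := by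
    rw [← mul_conjTranspose_sub_mul_conjTranspose]
    module
  calc ‖‖H‖⁻¹ • (H * Hᴴ) - ‖G‖⁻¹ • (G * Gᴴ)‖
      ≤ |‖H‖⁻¹ - ‖G‖⁻¹| * (‖H‖ * ‖H‖) + ‖G‖⁻¹ * (‖H‖ * ‖H - G‖ + ‖H - G‖ * ‖G‖) := by
        rw [hsplit]
        refine norm_add_le_of_le ?_ ?_ <;> rw [norm_smul, Real.norm_eq_abs]
        · gcongr
          exact frobenius_norm_mul_conjTranspose_le H H
        · rw [abs_of_pos (inv_pos.mpr hb)]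
          gcongr
          exact norm_add_le_of_le (frobenius_norm_mul_conjTranspose_le _ _)
            (frobenius_norm_mul_conjTranspose_le _ _)
    _ ≤ ‖H - G‖ / (‖H‖ * ‖G‖) * (‖H‖ * ‖H‖) +
          ‖G‖⁻¹ * (‖H‖ * ‖H - G‖ + ‖H - G‖ * ‖G‖) := by gcongr
    _ = ‖H - G‖ * (1 + 2 * ‖H‖ / ‖G‖) := by
        field_simp
        ring

end Frobenius

theorem mrt_demand_deviation_bound_general {K N : ℕ} (B δ P : ℝ)
    (hB : 0 ≤ B) (hδ : 0 ≤ δ)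
    (H Htilde : Matrix (Fin K) (Fin N) ℂ) (hHne : H ≠ 0)
    (hHB : frobNorm H ≤ B) (hHt : frobNorm Htilde ≤ δ * frobNorm H)
    (Hhat : Matrix (Fin K) (Fin N) ℂ) (hHhat : Hhat = H - Htilde)
    (hne : Hhat ≠ 0) :
    frobNorm ((Real.sqrt P / frobNorm H) • (H * Hᴴ) -
        (Real.sqrt P / frobNorm Hhat) • (Hhat * Hhatᴴ)) ≤
      Real.sqrt P * B * δ * (1 + (2 + δ) * B / frobNorm Hhat) := by
  simp only [frobNorm_eq_norm] at *
  have hGram := frobenius_norm_inv_smul_mul_conjTranspose_sub_le hHne hne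
  rw [hHhat, sub_sub_cancel, ← hHhat] at hGram
  have hHtB : ‖Htilde‖ ≤ δ * B := hHt.trans (by gcongr)
  have hfactor : (√P / ‖H‖) • (H * Hᴴ) - (√P / ‖Hhat‖) • (Hhat * Hhatᴴ) =
      √P • (‖H‖⁻¹ • (H * Hᴴ) - ‖Hhat‖⁻¹ • (Hhat * Hhatᴴ)) := by
    simp only [div_eq_mul_inv, smul_sub, smul_smul]
  calc ‖(√P / ‖H‖) • (H * Hᴴ) - (√P / ‖Hhat‖) • (Hhat * Hhatᴴ)‖
      = √P * ‖‖H‖⁻¹ • (H * Hᴴ) - ‖Hhat‖⁻¹ • (Hhat * Hhatᴴ)‖ := by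
        rw [hfactor, norm_smul, Real.norm_of_nonneg (Real.sqrt_nonneg P)]
    _ ≤ √P * (‖Htilde‖ * (1 + 2 * ‖H‖ / ‖Hhat‖)) := by gcongr
    _ ≤ √P * (δ * B * (1 + (2 + δ) * B / ‖Hhat‖)) := by
        gcongr
        linarith
    _ = √P * B * δ * (1 + (2 + δ) * B / ‖Hhat‖) := by ring

/-- MRT part of Lemma 3: deviation between the true and estimated
virtualization demand blocks under maximum-ratio transmission. -/
theorem mrt_demand_deviation_bound {K N : ℕ} (B δ P : ℝ)
    (hB : 0 ≤ B) (hδ : 0 ≤ δ) (hP : 0 ≤ P)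
    (H Htilde : Matrix (Fin K) (Fin N) ℂ) (hHne : H ≠ 0) (hHtne : Htilde ≠ 0)
    (hHB : frobNorm H ≤ B) (hHt : frobNorm Htilde ≤ δ * frobNorm H)
    (Hhat : Matrix (Fin K) (Fin N) ℂ) (hHhat : Hhat = H - Htilde)
    (hne : Hhat ≠ 0) :
    frobNorm ((Real.sqrt P / frobNorm H) • (H * Hᴴ) -
        (Real.sqrt P / frobNorm Hhat) • (Hhat * Hhatᴴ)) ≤
      Real.sqrt P * B * δ * (1 + (2 + δ) * B / frobNorm Hhat) :=
  mrt_demand_deviation_bound_general B δ P hB hδ H Htilde hHne hHB hHt Hhat hHhat hne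
end

section
/- Let ε > 0, S' > 0, B ≥ 0, δ ≥ 0, ξ ≥ 0, and 0 ≤ P̄ ≤ P_max be real numbers, and set U = S'/ε. Let Z, p : ℕ → ℝ satisfy Z(0) = 0, 0 ≤ p(t) ≤ P_max for all t, and Z(t+1) = max{Z(t) + p(t) − P̄, 0} for all t. Suppose that for every t, Z(t) ≥ U·B²(1+δ)²·ξ implies p(t) ≤ P̄. Then for every integer T ≥ 1: (1/T)·Σ_{t=0}^{T−1} p(t) ≤ P̄ + (S'·B²(1+δ)²·ξ + ε·(P_max − P̄)) / (ε·T). -/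
/-!
The virtual queue never exceeds the threshold `C = U B² (1 + δ)² ξ` by more than one slot's
worth of excess power `Pmax - Pbar`: above the threshold the power is at most `Pbar`, so the
queue does not grow. On the other hand the queue dominates the accumulated excess power
`∑ (p t - Pbar)`, since `Z (t + 1) ≥ Z t + p t - Pbar`. Dividing by `T` gives the bound.
-/

open Finset

theorem lindley_le_of_threshold {Z a : ℕ → ℝ} {C D : ℝ} (hCD : 0 ≤ C + D) (h0 : Z 0 ≤ C + D)
    (hrec : ∀ t, Z (t + 1) = max (Z t + a t) 0) (ha : ∀ t, a t ≤ D)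
    (hthr : ∀ t, C ≤ Z t → a t ≤ 0) (t : ℕ) : Z t ≤ C + D := by
  induction t with
  | zero => exact h0
  | succ n ih =>
    rw [hrec n]
    refine max_le ?_ hCD
    rcases le_or_gt C (Z n) with hC | hC
    · linarith [hthr n hC]
    · linarith [ha n]

theorem sum_range_le_sub_of_add_le_succ {Z a : ℕ → ℝ} (h : ∀ t, Z t + a t ≤ Z (t + 1))
    (T : ℕ) : ∑ t ∈ range T, a t ≤ Z T - Z 0 :=
  calc ∑ t ∈ range T, a t ≤ ∑ t ∈ range T, (Z (t + 1) - Z t) :=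
        sum_le_sum fun t _ => by linarith [h t]
    _ = Z T - Z 0 := sum_range_sub Z T

theorem percell_time_averaged_power_bound_general
    (ε S' B δ ξ Pbar Pmax : ℝ)
    (hε : 0 < ε) (hS : 0 < S') (hξ : 0 ≤ ξ)
    (hPP : Pbar ≤ Pmax)
    (Z p : ℕ → ℝ) (hZ0 : Z 0 = 0)
    (hp : ∀ t, 0 ≤ p t ∧ p t ≤ Pmax)
    (hrec : ∀ t, Z (t + 1) = max (Z t + p t - Pbar) 0)
    (hthr : ∀ t, (S' / ε) * B ^ 2 * (1 + δ) ^ 2 * ξ ≤ Z t → p t ≤ Pbar) :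
    ∀ T : ℕ, 1 ≤ T →
      (1 / (T : ℝ)) * ∑ t ∈ Finset.range T, p t ≤
        Pbar + (S' * B ^ 2 * (1 + δ) ^ 2 * ξ + ε * (Pmax - Pbar)) / (ε * T) := by
  intro T hT
  set C := (S' / ε) * B ^ 2 * (1 + δ) ^ 2 * ξ
  have hC : 0 ≤ C := by positivity
  have hrec' : ∀ t, Z (t + 1) = max (Z t + (p t - Pbar)) 0 := fun t => by
    rw [hrec t, add_sub_assoc]
  have hZT : Z T ≤ C + (Pmax - Pbar) :=
    lindley_le_of_threshold (by linarith) (by linarith) hrec'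
      (fun t => by linarith [(hp t).2]) (fun t ht => by linarith [hthr t ht]) T
  have hsum : ∑ t ∈ range T, (p t - Pbar) ≤ Z T - Z 0 :=
    sum_range_le_sub_of_add_le_succ (fun t => (hrec' t).symm ▸ le_max_left _ _) T
  rw [sum_sub_distrib, sum_const, card_range, nsmul_eq_mul, hZ0] at hsum
  have hTpos : (0 : ℝ) < T := by exact_mod_cast hT
  have hbound : (S' * B ^ 2 * (1 + δ) ^ 2 * ξ + ε * (Pmax - Pbar)) / (ε * T)
      = (C + (Pmax - Pbar)) / T := by
    simp only [C]
    field_simp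
  rw [hbound, one_div_mul_eq_div, div_le_iff₀ hTpos, add_mul, div_mul_cancel₀ _ hTpos.ne']
  linarith

/-- Deterministic content of the per-cell transmit power bound (38) in
Theorem 2 (with drift-plus-penalty weight U = S'/ε). -/
theorem percell_time_averaged_power_bound
    (ε S' B δ ξ Pbar Pmax : ℝ)
    (hε : 0 < ε) (hS : 0 < S') (hB : 0 ≤ B) (hδ : 0 ≤ δ) (hξ : 0 ≤ ξ)
    (hPbar : 0 ≤ Pbar) (hPP : Pbar ≤ Pmax)
    (Z p : ℕ → ℝ) (hZ0 : Z 0 = 0)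
    (hp : ∀ t, 0 ≤ p t ∧ p t ≤ Pmax)
    (hrec : ∀ t, Z (t + 1) = max (Z t + p t - Pbar) 0)
    (hthr : ∀ t, (S' / ε) * B ^ 2 * (1 + δ) ^ 2 * ξ ≤ Z t → p t ≤ Pbar) :
    ∀ T : ℕ, 1 ≤ T →
      (1 / (T : ℝ)) * ∑ t ∈ Finset.range T, p t ≤
        Pbar + (S' * B ^ 2 * (1 + δ) ^ 2 * ξ + ε * (Pmax - Pbar)) / (ε * T) :=
  percell_time_averaged_power_bound_general ε S' B δ ξ Pbar Pmax hε hS hξ hPP Z p hZ0 hp hrec hthr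
end
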